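/- Let X ⊆ ℝ^d be convex, let f : ℝ^d → ℝ be convex and differentiable, let y ∈ X with ‖∇f(y)‖ ≤ F for some F ≥ 0, let Q ∈ ℝ^m with Q_i ≥ 0 for all i, let ĝ : ℝ^d → ℝ^m have every component function convex, and let V > 0, η > 0, ξ ≥ 0. Define f̂(u) = f(y) + ⟨∇f(y), u − y⟩, let z ∈ X be a minimizer over X of u ↦ V f̂(u) + ⟨Q, ĝ(u)⟩ + (1/(2η)) ‖u − y‖², and define the updated virtual queue Q' ∈ ℝ^m componentwise by Q'_i = max(Q_i + ĝ(z)_i + ξ, 0). Then for every x ∈ X: V (f(y) − f(x)) + (1/2)‖Q'‖² − (1/2)‖Q‖² ≤ ⟨Q, ĝ(x) + ξ·1⟩ + (1/(2η)) (‖x − y‖² − ‖x − z‖²) + (η V² F²)/2 + (1/2) ‖ĝ(z) + ξ·1‖². -/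

import Mathlib

open scoped RealInnerProductSpace
set_option maxHeartbeats 1000000

lemma grad_ineq {E : Type*} [NormedAddCommGroup E] [InnerProductSpace ℝ E] [CompleteSpace E]
    (f : E → ℝ) (hf : ConvexOn ℝ Set.univ f) (y g : E) (hg : HasGradientAt f g y)
    (x : E) : f y + ⟪g, x - y⟫ ≤ f x := by
  set φ : ℝ → ℝ := fun t => f (y + t • (x - y)) with hφ
  have hconv : ConvexOn ℝ Set.univ φ := by
    have h0 := hf.comp_affineMap (AffineMap.lineMap y x : ℝ →ᵃ[ℝ] E)
    have he : (f ∘ (AffineMap.lineMap y x : ℝ →ᵃ[ℝ] E)) = φ := by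
      funext t
      simp only [Function.comp, AffineMap.lineMap_apply, φ, vsub_eq_sub, vadd_eq_add]
      rw [add_comm]
    rw [he] at h0
    simpa using h0
  have hline : HasDerivAt (fun t : ℝ => y + t • (x - y)) (x - y) 0 := by
    simpa using ((hasDerivAt_id (0:ℝ)).smul_const (x - y)).const_add y
  have hd : HasDerivAt φ ⟪g, x - y⟫ 0 := by
    have hfd : HasFDerivAt f ((InnerProductSpace.toDual ℝ E) g) (y + (0:ℝ) • (x - y)) := by
      simpa using hg.hasFDerivAt
    have := hfd.comp_hasDerivAt 0 hline
    simp [φ] at this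
    exact this
  have h1 : deriv φ 0 ≤ slope φ 0 1 :=
    hconv.deriv_le_slope (Set.mem_univ 0) (Set.mem_univ 1) one_pos hd.differentiableAt
  rw [hd.deriv] at h1
  simp [slope_def_field, φ] at h1
  linarith

lemma inner_mono {m : ℕ} (Q a b : EuclideanSpace ℝ (Fin m)) (hQ : ∀ i, 0 ≤ Q i)
    (h : ∀ i, a i ≤ b i) : ⟪Q, a⟫ ≤ ⟪Q, b⟫ := by
  simp only [PiLp.inner_apply, RCLike.inner_apply, conj_trivial]
  exact Finset.sum_le_sum fun i _ => mul_le_mul_of_nonneg_right (h i) (hQ i)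

lemma norm_sq_sum {m : ℕ} (a : EuclideanSpace ℝ (Fin m)) : ‖a‖^2 = ∑ i, (a i)^2 := by
  rw [EuclideanSpace.norm_eq, Real.sq_sqrt (Finset.sum_nonneg fun i _ => sq_nonneg _)]
  simp [Real.norm_eq_abs, sq_abs]

lemma combo_norm_sq {E : Type*} [NormedAddCommGroup E] [InnerProductSpace ℝ E]
    (t : ℝ) (a b : E) :
    ‖(1-t) • a + t • b‖^2 = (1-t)*‖a‖^2 + t*‖b‖^2 - t*(1-t)*‖a-b‖^2 := by
  rw [← real_inner_self_eq_norm_sq, ← real_inner_self_eq_norm_sq,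
    ← real_inner_self_eq_norm_sq, ← real_inner_self_eq_norm_sq]
  simp only [inner_add_left, inner_add_right, inner_sub_left, inner_sub_right,
    inner_smul_left, inner_smul_right, conj_trivial, real_inner_comm a b]
  ring


/-- The all-ones vector `1 ∈ ℝ^m`. -/
def onesVec (m : ℕ) : EuclideanSpace ℝ (Fin m) := WithLp.toLp 2 (fun _ => 1)

/-- primal optimality combined with the virtual-queue drift bound in SELO.
With `z ∈ X` minimizing `u ↦ V f̂(u) + ⟨Q, ĝ(u)⟩ + (1/(2η))‖u - y‖²` over `X` and the
updated virtual queue `Q'_i = max(Q_i + ĝ(z)_i + ξ, 0)`, for every `x ∈ X`: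
`V (f(y) - f(x)) + (1/2)‖Q'‖² - (1/2)‖Q‖² ≤
  ⟨Q, ĝ(x) + ξ·1⟩ + (1/(2η))(‖x-y‖² - ‖x-z‖²) + ηV²F²/2 + (1/2)‖ĝ(z) + ξ·1‖²`. -/
theorem selo_regret_plus_drift {d m : ℕ}
    (X : Set (EuclideanSpace ℝ (Fin d))) (hX : Convex ℝ X)
    (f : EuclideanSpace ℝ (Fin d) → ℝ) (hf : ConvexOn ℝ Set.univ f)
    (hdiff : Differentiable ℝ f)
    (y : EuclideanSpace ℝ (Fin d)) (hy : y ∈ X)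
    (g : EuclideanSpace ℝ (Fin d)) (hg : HasGradientAt f g y)
    (F : ℝ) (hF : 0 ≤ F) (hgF : ‖g‖ ≤ F)
    (Q : EuclideanSpace ℝ (Fin m)) (hQ : ∀ i, 0 ≤ Q i)
    (ghat : EuclideanSpace ℝ (Fin d) → EuclideanSpace ℝ (Fin m))
    (hghat : ∀ i, ConvexOn ℝ Set.univ (fun u => ghat u i))
    (V η ξ : ℝ) (hV : 0 < V) (hη : 0 < η) (hξ : 0 ≤ ξ)
    (z : EuclideanSpace ℝ (Fin d)) (hz : z ∈ X)
    (hmin : ∀ x ∈ X,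
      V * (f y + ⟪g, z - y⟫) + ⟪Q, ghat z⟫ + (1 / (2 * η)) * ‖z - y‖ ^ 2 ≤
        V * (f y + ⟪g, x - y⟫) + ⟪Q, ghat x⟫ + (1 / (2 * η)) * ‖x - y‖ ^ 2)
    (Q' : EuclideanSpace ℝ (Fin m))
    (hQ' : ∀ i, Q' i = max (Q i + ghat z i + ξ) 0) :
    ∀ x ∈ X,
      V * (f y - f x) + (1 / 2) * ‖Q'‖ ^ 2 - (1 / 2) * ‖Q‖ ^ 2 ≤
        ⟪Q, ghat x + ξ • onesVec m⟫ + (1 / (2 * η)) * (‖x - y‖ ^ 2 - ‖x - z‖ ^ 2) +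
          η * V ^ 2 * F ^ 2 / 2 + (1 / 2) * ‖ghat z + ξ • onesVec m‖ ^ 2 := by
  intro x hx
  set v : EuclideanSpace ℝ (Fin m) := ghat z + ξ • onesVec m with hv
  -- drift bound
  have hQ'sq : ‖Q'‖ ^ 2 ≤ ‖Q + v‖ ^ 2 := by
    rw [norm_sq_sum, norm_sq_sum]
    refine Finset.sum_le_sum fun i _ => ?_
    have hvi : (Q + v) i = Q i + ghat z i + ξ := by
      simp only [hv, PiLp.add_apply, PiLp.smul_apply, onesVec, smul_eq_mul, PiLp.toLp_apply]
      ring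
    rw [hQ' i, hvi]
    calc (max (Q i + ghat z i + ξ) 0) ^ 2
        ≤ |Q i + ghat z i + ξ| ^ 2 :=
          pow_le_pow_left₀ (le_max_right _ 0)
            (max_le (le_abs_self _) (abs_nonneg _)) 2
      _ = (Q i + ghat z i + ξ) ^ 2 := sq_abs _
  have hexp : ‖Q + v‖ ^ 2 = ‖Q‖ ^ 2 + 2 * ⟪Q, v⟫ + ‖v‖ ^ 2 := norm_add_sq_real Q v
  have hdrift : (1/2) * ‖Q'‖ ^ 2 - (1/2) * ‖Q‖ ^ 2 ≤ ⟪Q, v⟫ + (1/2) * ‖v‖ ^ 2 := by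
    linarith
  -- gradient inequality
  have hgr : f y + ⟪g, x - y⟫ ≤ f x := grad_ineq f hf y g hg x
  -- strong minimality
  have hstrong : (1 / (2 * η)) * ‖x - z‖ ^ 2 ≤
      (V * ⟪g, x - y⟫ + ⟪Q, ghat x⟫ + (1 / (2 * η)) * ‖x - y‖ ^ 2) -
      (V * ⟪g, z - y⟫ + ⟪Q, ghat z⟫ + (1 / (2 * η)) * ‖z - y‖ ^ 2) := by
    set D : ℝ := (V * ⟪g, x - y⟫ + ⟪Q, ghat x⟫ + (1 / (2 * η)) * ‖x - y‖ ^ 2) -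
      (V * ⟪g, z - y⟫ + ⟪Q, ghat z⟫ + (1 / (2 * η)) * ‖z - y‖ ^ 2) with hD
    have hstep : ∀ t : ℝ, t ∈ Set.Ioo (0:ℝ) 1 →
        ((1 - t) / (2 * η)) * ‖x - z‖ ^ 2 ≤ D := by
      intro t ht
      obtain ⟨ht0, ht1⟩ := ht
      set zt : EuclideanSpace ℝ (Fin d) := (1 - t) • z + t • x with hzt
      have hztX : zt ∈ X := hX hz hx (by linarith) ht0.le (by ring)
      have h1 := hmin zt hztX
      have hsub : zt - y = (1 - t) • (z - y) + t • (x - y) := by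
        rw [hzt]; module
      have hlin : ⟪g, zt - y⟫ = (1 - t) * ⟪g, z - y⟫ + t * ⟪g, x - y⟫ := by
        rw [hsub, inner_add_right, real_inner_smul_right, real_inner_smul_right]
      have hconvg : ⟪Q, ghat zt⟫ ≤ (1 - t) * ⟪Q, ghat z⟫ + t * ⟪Q, ghat x⟫ := by
        have h2 : ∀ i, ghat zt i ≤ ((1 - t) • ghat z + t • ghat x) i := by
          intro i
          rw [hzt]
          simp only [PiLp.add_apply, PiLp.smul_apply, smul_eq_mul]
          exact (hghat i).2 (Set.mem_univ z) (Set.mem_univ x)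
            (by linarith) ht0.le (by ring)
        calc ⟪Q, ghat zt⟫ ≤ ⟪Q, (1 - t) • ghat z + t • ghat x⟫ :=
              inner_mono _ _ _ hQ h2
          _ = (1 - t) * ⟪Q, ghat z⟫ + t * ⟪Q, ghat x⟫ := by
              rw [inner_add_right, real_inner_smul_right, real_inner_smul_right]
      have hq : ‖zt - y‖ ^ 2 =
          (1 - t) * ‖z - y‖ ^ 2 + t * ‖x - y‖ ^ 2 - t * (1 - t) * ‖x - z‖ ^ 2 := by
        rw [hsub, combo_norm_sq]
        have h3 : (z - y) - (x - y) = z - x := by module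
        rw [h3, norm_sub_rev z x]
      rw [hlin, hq] at h1
      have key : (1 / (2 * η)) * (t * (1 - t) * ‖x - z‖ ^ 2) ≤ t * D := by
        rw [hD]
        nlinarith [h1, hconvg]
      have key2 : t * (((1 - t) / (2 * η)) * ‖x - z‖ ^ 2) ≤ t * D := by
        have heq : t * (((1 - t) / (2 * η)) * ‖x - z‖ ^ 2) =
            (1 / (2 * η)) * (t * (1 - t) * ‖x - z‖ ^ 2) := by ring
        linarith [key]
      exact le_of_mul_le_mul_left key2 ht0
    -- pass to the limit t → 0
    refine le_of_forall_pos_le_add fun ε hε => ?_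
    set c : ℝ := ‖x - z‖ ^ 2 with hc
    have hc0 : 0 ≤ c := sq_nonneg _
    have hcpos : (0:ℝ) < c + 1 := by linarith
    set t : ℝ := min (1/2) (2 * η * ε / (c + 1)) with htdef
    have htpos : 0 < t := lt_min (by norm_num) (div_pos (by positivity) hcpos)
    have htlt : t < 1 := lt_of_le_of_lt (min_le_left _ _) (by norm_num)
    have hkey := hstep t ⟨htpos, htlt⟩
    have hle : t ≤ 2 * η * ε / (c + 1) := min_le_right _ _
    have h4 : t * (c + 1) ≤ 2 * η * ε := by
      have h4a := mul_le_mul_of_nonneg_right hle hcpos.le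
      rwa [div_mul_cancel₀ _ (ne_of_gt hcpos)] at h4a
    have h5 : t * c ≤ 2 * η * ε := by
      have h5a : t * c ≤ t * (c + 1) :=
        mul_le_mul_of_nonneg_left (by linarith) htpos.le
      linarith
    have h6 : t * c / (2 * η) ≤ ε := by
      rw [div_le_iff₀ (by linarith : (0:ℝ) < 2 * η)]
      linarith
    have h7 : (1 / (2 * η)) * c = ((1 - t) / (2 * η)) * c + t * c / (2 * η) := by
      ring
    linarith
  -- Young's inequality for the gradient term
  have hiy : -(V * ⟪g, z - y⟫) ≤ V * (F * ‖z - y‖) := by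
    have h1 : |⟪g, z - y⟫| ≤ ‖g‖ * ‖z - y‖ := abs_real_inner_le_norm g (z - y)
    have h2 : ‖g‖ * ‖z - y‖ ≤ F * ‖z - y‖ :=
      mul_le_mul_of_nonneg_right hgF (norm_nonneg _)
    have h3 : -⟪g, z - y⟫ ≤ F * ‖z - y‖ := by
      have := neg_abs_le ⟪g, z - y⟫
      linarith
    have := mul_le_mul_of_nonneg_left h3 hV.le
    linarith
  have hyoung : V * (F * ‖z - y‖) ≤ η * V ^ 2 * F ^ 2 / 2 + (1 / (2 * η)) * ‖z - y‖ ^ 2 := by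
    have h1 : V * (F * ‖z - y‖) ≤ (η ^ 2 * V ^ 2 * F ^ 2 + ‖z - y‖ ^ 2) / (2 * η) := by
      rw [le_div_iff₀ (by linarith : (0:ℝ) < 2 * η)]
      nlinarith [sq_nonneg (η * V * F - ‖z - y‖)]
    have h2 : (η ^ 2 * V ^ 2 * F ^ 2 + ‖z - y‖ ^ 2) / (2 * η) =
        η * V ^ 2 * F ^ 2 / 2 + (1 / (2 * η)) * ‖z - y‖ ^ 2 := by
      field_simp
    linarith
  -- inner product expansions
  have e1 : ⟪Q, ghat x + ξ • onesVec m⟫ = ⟪Q, ghat x⟫ + ξ * ⟪Q, onesVec m⟫ := by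
    rw [inner_add_right, real_inner_smul_right]
  have e2 : ⟪Q, v⟫ = ⟪Q, ghat z⟫ + ξ * ⟪Q, onesVec m⟫ := by
    rw [hv, inner_add_right, real_inner_smul_right]
  -- final combination
  have hgrV : V * (f y - f x) ≤ -(V * ⟪g, x - y⟫) := by
    have := mul_le_mul_of_nonneg_left (by linarith : f y - f x ≤ -⟪g, x - y⟫) hV.le
    linarith
  linarith
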